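/- (On-policy Q-functions depend only on rewards of policy-supported actions.) Let (S, A, 𝒜, p, γ) be the data of a finite soft MDP without a fixed reward, let π be a policy, and let r₁, r₂ : S × A → ℝ be two reward functions that agree on all policy-supported pairs, i.e. r₁(s,a) = r₂(s,a) whenever π(a|s) > 0. Let Q₁ and Q₂ be the unique fixed points of the on-policy soft Bellman operators T^π with rewards r₁ and r₂ respectively. Then Q₁(s,a) − Q₂(s,a) = r₁(s,a) − r₂(s,a) for all s ∈ S and a ∈ A; in particular Q₁(s,a) = Q₂(s,a) whenever π(a|s) > 0. -/
import Mathlib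


/-- The data of a finite soft MDP without a fixed reward: finite nonempty state space `S`,
finite action space `A`, nonempty allowed-action sets, a transition kernel, and a
discount `0 ≤ γ < 1`. -/
structure SoftMDPData (S A : Type) [Fintype S] [Fintype A] where
  act : S → Finset A
  act_nonempty : ∀ s, (act s).Nonempty
  p : S → A → S → ℝ
  p_nonneg : ∀ s a s', 0 ≤ p s a s'
  p_sum_one : ∀ s a, ∑ s', p s a s' = 1
  γ : ℝ
  γ_nonneg : 0 ≤ γ
  γ_lt_one : γ < 1

/-- A policy: a probability mass function `π(·|s)` on `A` for each state `s`,
supported on the allowed actions `𝒜(s)`. -/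
structure Policy {S A : Type} [Fintype S] [Fintype A] (M : SoftMDPData S A) where
  pi : S → A → ℝ
  pi_nonneg : ∀ s a, 0 ≤ pi s a
  pi_sum_one : ∀ s, ∑ a, pi s a = 1
  pi_support : ∀ s a, a ∉ M.act s → pi s a = 0

/-- The on-policy soft Bellman backup operator with reward `r`:
`(T^π Q)(s,a) = r(s,a) + γ ∑_{s'} p(s,a,s') ∑_{a'} π(a'|s') (Q(s',a') − log π(a'|s'))`,
where terms with `π(a'|s') = 0` contribute `0` (as the product vanishes). -/
noncomputable def softBellmanPiR {S A : Type} [Fintype S] [Fintype A]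
    (M : SoftMDPData S A) (π : Policy M) (r : S → A → ℝ) (Q : S → A → ℝ) : S → A → ℝ :=
  fun s a => r s a + M.γ * ∑ s', M.p s a s' *
    ∑ a', π.pi s' a' * (Q s' a' - Real.log (π.pi s' a'))

/-- On-policy Q-functions depend only on rewards of policy-supported
actions: if `r₁ = r₂` on all pairs with `π(a|s) > 0` and `Q₁, Q₂` are the fixed points
of `T^π` with rewards `r₁, r₂`, then `Q₁ − Q₂ = r₁ − r₂` everywhere; in particular
`Q₁ = Q₂` wherever `π(a|s) > 0`. -/
theorem softQ_depends_only_on_supported_rewards {S A : Type} [Fintype S] [Fintype A]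
    (M : SoftMDPData S A) (π : Policy M) (r₁ r₂ : S → A → ℝ)
    (hagree : ∀ s a, 0 < π.pi s a → r₁ s a = r₂ s a)
    (Q₁ Q₂ : S → A → ℝ)
    (h₁ : softBellmanPiR M π r₁ Q₁ = Q₁)
    (h₂ : softBellmanPiR M π r₂ Q₂ = Q₂) :
    (∀ s a, Q₁ s a - Q₂ s a = r₁ s a - r₂ s a) ∧
    (∀ s a, 0 < π.pi s a → Q₁ s a = Q₂ s a) := by
  classical
  set E : S → A → ℝ := fun s a => Q₁ s a - Q₂ s a - (r₁ s a - r₂ s a) with hE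
  have key : ∀ s a, E s a = M.γ * ∑ s', M.p s a s' * ∑ a', π.pi s' a' * E s' a' := by
    intro s a
    have e1 : r₁ s a + M.γ * ∑ s', M.p s a s' *
        ∑ a', π.pi s' a' * (Q₁ s' a' - Real.log (π.pi s' a')) = Q₁ s a :=
      congrFun (congrFun h₁ s) a
    have e2 : r₂ s a + M.γ * ∑ s', M.p s a s' *
        ∑ a', π.pi s' a' * (Q₂ s' a' - Real.log (π.pi s' a')) = Q₂ s a :=
      congrFun (congrFun h₂ s) a
    have hinner : ∀ s', ∑ a', π.pi s' a' * (Q₁ s' a' - Real.log (π.pi s' a'))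
        - ∑ a', π.pi s' a' * (Q₂ s' a' - Real.log (π.pi s' a'))
        = ∑ a', π.pi s' a' * E s' a' := by
      intro s'
      rw [← Finset.sum_sub_distrib]
      refine Finset.sum_congr rfl fun a' _ => ?_
      rcases eq_or_lt_of_le (π.pi_nonneg s' a') with h0 | h0
      · simp [← h0]
      · have := hagree s' a' h0
        simp only [hE]
        rw [this]
        ring
    have : E s a = (r₁ s a + M.γ * ∑ s', M.p s a s' *
        ∑ a', π.pi s' a' * (Q₁ s' a' - Real.log (π.pi s' a')))
        - (r₂ s a + M.γ * ∑ s', M.p s a s' *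
        ∑ a', π.pi s' a' * (Q₂ s' a' - Real.log (π.pi s' a'))) - (r₁ s a - r₂ s a) := by
      rw [e1, e2]
    rw [this]
    have : (∑ s', M.p s a s' * ∑ a', π.pi s' a' * (Q₁ s' a' - Real.log (π.pi s' a')))
        - (∑ s', M.p s a s' * ∑ a', π.pi s' a' * (Q₂ s' a' - Real.log (π.pi s' a')))
        = ∑ s', M.p s a s' * ∑ a', π.pi s' a' * E s' a' := by
      rw [← Finset.sum_sub_distrib]
      refine Finset.sum_congr rfl fun s' _ => ?_
      rw [← mul_sub, hinner]
    rw [← this, mul_sub]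
    ring
  have hEzero : ∀ s a, E s a = 0 := by
    intro s a
    obtain ⟨⟨s0, a0⟩, -, hmax⟩ := Finset.exists_max_image (Finset.univ : Finset (S × A))
      (fun q => |E q.1 q.2|) ⟨(s, a), Finset.mem_univ _⟩
    set C := |E s0 a0| with hC
    have hCnn : 0 ≤ C := abs_nonneg _
    have hbound : ∀ s' a', |E s' a'| ≤ C := fun s' a' => hmax (s', a') (Finset.mem_univ _)
    have hCle : C ≤ M.γ * C := by
      have : |E s0 a0| = M.γ * |∑ s', M.p s0 a0 s' * ∑ a', π.pi s' a' * E s' a'| := by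
        rw [key s0 a0, abs_mul, abs_of_nonneg M.γ_nonneg]
      have hle : |∑ s', M.p s0 a0 s' * ∑ a', π.pi s' a' * E s' a'| ≤ C := by
        calc |∑ s', M.p s0 a0 s' * ∑ a', π.pi s' a' * E s' a'|
            ≤ ∑ s', |M.p s0 a0 s' * ∑ a', π.pi s' a' * E s' a'| := Finset.abs_sum_le_sum_abs _ _
          _ ≤ ∑ s', M.p s0 a0 s' * C := by
              refine Finset.sum_le_sum fun s' _ => ?_
              rw [abs_mul, abs_of_nonneg (M.p_nonneg s0 a0 s')]
              refine mul_le_mul_of_nonneg_left ?_ (M.p_nonneg s0 a0 s')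
              calc |∑ a', π.pi s' a' * E s' a'|
                  ≤ ∑ a', |π.pi s' a' * E s' a'| := Finset.abs_sum_le_sum_abs _ _
                _ ≤ ∑ a', π.pi s' a' * C := by
                    refine Finset.sum_le_sum fun a' _ => ?_
                    rw [abs_mul, abs_of_nonneg (π.pi_nonneg s' a')]
                    exact mul_le_mul_of_nonneg_left (hbound s' a') (π.pi_nonneg s' a')
                _ = C := by rw [← Finset.sum_mul, π.pi_sum_one, one_mul]
          _ = C := by rw [← Finset.sum_mul, M.p_sum_one, one_mul]
      conv_lhs => rw [hC, this]
      exact mul_le_mul_of_nonneg_left hle M.γ_nonneg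
    have hC0 : C ≤ 0 := by nlinarith [M.γ_lt_one]
    have : |E s a| ≤ 0 := le_trans (hbound s a) hC0
    exact abs_eq_zero.mp (le_antisymm this (abs_nonneg _))
  constructor
  · intro s a
    have := hEzero s a
    simp only [hE] at this
    linarith
  · intro s a hpa
    have := hEzero s a
    simp only [hE] at this
    have := hagree s a hpa
    linarith [hEzero s a]
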